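/- arXiv:2506.13614 — 3 statements merged into one kernel-verified Lean document; each statement's English description precedes it below -/
import Mathlib

section
/- There exists a constant c > 0 (independent of x) such that for every x ∈ ℝⁿ, p_t(x | y) = c · p̃(x̃(x)) · exp(−‖x − y‖² / (2(σ_y² + σ_t²))). (This is the posterior–prior relation, Eq. (7) of the paper, for the denoising measurement model A = I.) -/
open MeasureTheory Real

/-- Isotropic Gaussian density on ℝⁿ with mean `m` and covariance `v • I`
(`v` is the variance, i.e. `v = σ²`): `N(x; m, σ²I) = (2πσ²)^{-n/2} exp(-‖x-m‖²/(2σ²))`. -/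
noncomputable def gaussDensity (n : ℕ) (v : ℝ) (m x : EuclideanSpace ℝ (Fin n)) : ℝ :=
  (2 * π * v) ^ (-(n : ℝ) / 2) * Real.exp (-‖x - m‖ ^ 2 / (2 * v))

/-! The posterior density is the prior integrated against `N(y; x₀, σ_y²) N(x; x₀, σ_t²)`, and as
a function of `x₀` this product of Gaussians is again a Gaussian, centred at the
precision-weighted mean `x̃(x)` with variance `σ̃²`, times the factor `N(x; y, σ_y² + σ_t²)`,
which does not depend on `x₀` and so comes out of the integral. -/

theorem integral_withDensity_ofReal {X E : Type*} [MeasurableSpace X] [NormedAddCommGroup E]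
    [NormedSpace ℝ E] {μ : Measure X} {f : X → ℝ} (hf : AEMeasurable f μ)
    (hf_nonneg : ∀ᵐ x ∂μ, 0 ≤ f x) (g : X → E) :
    ∫ x, g x ∂μ.withDensity (fun x => ENNReal.ofReal (f x)) = ∫ x, f x • g x ∂μ := by
  rw [integral_withDensity_eq_integral_toReal_smul₀ hf.ennreal_ofReal
    (.of_forall fun _ => ENNReal.ofReal_lt_top)]
  refine integral_congr_ae ?_
  filter_upwards [hf_nonneg] with x hx
  rw [ENNReal.toReal_ofReal hx]

theorem mul_norm_sub_sq_add_mul_norm_sub_sq {E : Type*} [NormedAddCommGroup E]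
    [InnerProductSpace ℝ E] {α β : ℝ} (hαβ : α + β ≠ 0) (x y z : E) :
    α * ‖y - z‖ ^ 2 + β * ‖x - z‖ ^ 2 =
      (α + β) * ‖(α + β)⁻¹ • (α • y + β • x) - z‖ ^ 2 + α * β / (α + β) * ‖x - y‖ ^ 2 := by
  have hz : (α + β)⁻¹ • (α • y + β • x) - z = (α + β)⁻¹ • (α • (y - z) + β • (x - z)) := by
    conv_lhs => rw [← inv_smul_smul₀ hαβ z]
    module
  rw [hz, ← sub_sub_sub_cancel_right x y z]
  generalize y - z = u
  generalize x - z = v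
  simp only [← real_inner_self_eq_norm_sq, inner_add_left, inner_add_right, inner_sub_left,
    inner_sub_right, real_inner_smul_left, real_inner_smul_right, real_inner_comm u v]
  field_simp
  ring

theorem gaussDensity_nonneg (n : ℕ) {v : ℝ} (hv : 0 ≤ v) (m x : EuclideanSpace ℝ (Fin n)) :
    0 ≤ gaussDensity n v m x := by
  unfold gaussDensity
  positivity

theorem continuous_gaussDensity_left (n : ℕ) (v : ℝ) (x : EuclideanSpace ℝ (Fin n)) :
    Continuous fun m => gaussDensity n v m x := by
  unfold gaussDensity
  fun_prop

theorem gaussDensity_mul_gaussDensity (n : ℕ) {a b : ℝ} (ha : 0 < a) (hb : 0 < b)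
    (m x y : EuclideanSpace ℝ (Fin n)) :
    gaussDensity n a m y * gaussDensity n b m x =
      gaussDensity n (a + b) y x *
        gaussDensity n (a⁻¹ + b⁻¹)⁻¹ m ((a⁻¹ + b⁻¹)⁻¹ • (a⁻¹ • y + b⁻¹ • x)) := by
  have hs : (a⁻¹ + b⁻¹)⁻¹ = a * b / (a + b) := by
    field_simp
    ring
  have hconst : (2 * π * a) ^ (-(n : ℝ) / 2) * (2 * π * b) ^ (-(n : ℝ) / 2) =
      (2 * π * (a + b)) ^ (-(n : ℝ) / 2) * (2 * π * (a⁻¹ + b⁻¹)⁻¹) ^ (-(n : ℝ) / 2) := by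
    rw [← mul_rpow (by positivity) (by positivity), ← mul_rpow (by positivity) (by positivity), hs]
    field_simp
  have hexp : -‖y - m‖ ^ 2 / (2 * a) + -‖x - m‖ ^ 2 / (2 * b) =
      -‖x - y‖ ^ 2 / (2 * (a + b)) +
        -‖(a⁻¹ + b⁻¹)⁻¹ • (a⁻¹ • y + b⁻¹ • x) - m‖ ^ 2 / (2 * (a⁻¹ + b⁻¹)⁻¹) := by
    have hsquare := mul_norm_sub_sq_add_mul_norm_sub_sq (by positivity : a⁻¹ + b⁻¹ ≠ 0) x y m
    generalize ‖(a⁻¹ + b⁻¹)⁻¹ • (a⁻¹ • y + b⁻¹ • x) - m‖ ^ 2 = w at hsquare ⊢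
    rw [hs]
    field_simp at hsquare ⊢
    linear_combination -hsquare
  unfold gaussDensity
  rw [mul_mul_mul_comm, hconst, ← exp_add, hexp, exp_add]
  ring

theorem posterior_prior_relation_denoising_general
    (n : ℕ)
    (μ₀ : Measure (EuclideanSpace ℝ (Fin n)))
    (σt σy : ℝ) (hσt : 0 < σt) (hσy : 0 < σy)
    (y : EuclideanSpace ℝ (Fin n))
    -- the normalizing constant `Z = ∫ N(y; x₀, σ_y² I) dμ₀(x₀) > 0`
    (Z : ℝ) (hZpos : 0 < Z)
    -- the denoising posterior `μ₀^y`, with density `N(y; x₀, σ_y² I)/Z` w.r.t. `μ₀`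
    (μpost : Measure (EuclideanSpace ℝ (Fin n)))
    (hpost : μpost = μ₀.withDensity
      (fun x₀ => ENNReal.ofReal (gaussDensity n (σy ^ 2) x₀ y / Z)))
    -- the noise-perturbed posterior density `p_t(x | y) = ∫ N(x; x₀, σ_t² I) dμ₀^y(x₀)`
    (pt : EuclideanSpace ℝ (Fin n) → ℝ)
    (hpt : ∀ x, pt x = ∫ x₀, gaussDensity n (σt ^ 2) x₀ x ∂μpost)
    -- `σ̃² = (σ_y⁻² + σ_t⁻²)⁻¹`
    (σtilde2 : ℝ) (hσtilde2 : σtilde2 = ((σy ^ 2)⁻¹ + (σt ^ 2)⁻¹)⁻¹)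
    -- `x̃(x) = σ̃² (σ_y⁻² y + σ_t⁻² x)`
    (xtilde : EuclideanSpace ℝ (Fin n) → EuclideanSpace ℝ (Fin n))
    (hxtilde : ∀ x, xtilde x = σtilde2 • ((σy ^ 2)⁻¹ • y + (σt ^ 2)⁻¹ • x))
    -- the noise-perturbed prior density at level `σ̃`: `p̃(z) = ∫ N(z; x₀, σ̃² I) dμ₀(x₀)`
    (ptilde : EuclideanSpace ℝ (Fin n) → ℝ)
    (hptilde : ∀ z, ptilde z = ∫ x₀, gaussDensity n σtilde2 x₀ z ∂μ₀) :
    ∃ c > 0, ∀ x, pt x = c * ptilde (xtilde x) *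
      Real.exp (-‖x - y‖ ^ 2 / (2 * (σy ^ 2 + σt ^ 2))) := by
  refine ⟨(2 * π * (σy ^ 2 + σt ^ 2)) ^ (-(n : ℝ) / 2) / Z, by positivity, fun x => ?_⟩
  have hlikelihood : Measurable fun x₀ => gaussDensity n (σy ^ 2) x₀ y / Z :=
    (continuous_gaussDensity_left n _ y).measurable.div_const Z
  have hproduct : ∀ x₀, gaussDensity n (σy ^ 2) x₀ y / Z * gaussDensity n (σt ^ 2) x₀ x =
      gaussDensity n (σy ^ 2 + σt ^ 2) y x / Z * gaussDensity n σtilde2 x₀ (xtilde x) := by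
    intro x₀
    rw [div_mul_eq_mul_div, gaussDensity_mul_gaussDensity n (by positivity) (by positivity),
      hxtilde, hσtilde2, div_mul_eq_mul_div]
  calc pt x = ∫ x₀, gaussDensity n (σy ^ 2) x₀ y / Z * gaussDensity n (σt ^ 2) x₀ x ∂μ₀ := by
        rw [hpt, hpost, integral_withDensity_ofReal hlikelihood.aemeasurable
          (.of_forall fun x₀ => div_nonneg (gaussDensity_nonneg n (by positivity) x₀ y) hZpos.le)]
        rfl
    _ = gaussDensity n (σy ^ 2 + σt ^ 2) y x / Z * ptilde (xtilde x) := by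
        simp_rw [hproduct]
        rw [integral_const_mul, hptilde]
    _ = _ := by
        unfold gaussDensity
        ring

/-- Eq. (7): the posterior–prior relation for the denoising measurement model `A = I`:
there is a constant `c > 0`, independent of `x`, with
`p_t(x | y) = c · p̃(x̃(x)) · exp(−‖x − y‖²/(2(σ_y² + σ_t²)))`. -/
theorem posterior_prior_relation_denoising
    (n : ℕ) (hn : 1 ≤ n)
    (μ₀ : Measure (EuclideanSpace ℝ (Fin n))) [IsProbabilityMeasure μ₀]
    (σt σy : ℝ) (hσt : 0 < σt) (hσy : 0 < σy)
    (y : EuclideanSpace ℝ (Fin n))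
    -- the normalizing constant `Z = ∫ N(y; x₀, σ_y² I) dμ₀(x₀) > 0`
    (Z : ℝ) (hZ : Z = ∫ x₀, gaussDensity n (σy ^ 2) x₀ y ∂μ₀) (hZpos : 0 < Z)
    -- the denoising posterior `μ₀^y`, with density `N(y; x₀, σ_y² I)/Z` w.r.t. `μ₀`
    (μpost : Measure (EuclideanSpace ℝ (Fin n)))
    (hpost : μpost = μ₀.withDensity
      (fun x₀ => ENNReal.ofReal (gaussDensity n (σy ^ 2) x₀ y / Z)))
    -- the noise-perturbed posterior density `p_t(x | y) = ∫ N(x; x₀, σ_t² I) dμ₀^y(x₀)`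
    (pt : EuclideanSpace ℝ (Fin n) → ℝ)
    (hpt : ∀ x, pt x = ∫ x₀, gaussDensity n (σt ^ 2) x₀ x ∂μpost)
    -- `σ̃² = (σ_y⁻² + σ_t⁻²)⁻¹`
    (σtilde2 : ℝ) (hσtilde2 : σtilde2 = ((σy ^ 2)⁻¹ + (σt ^ 2)⁻¹)⁻¹)
    -- `x̃(x) = σ̃² (σ_y⁻² y + σ_t⁻² x)`
    (xtilde : EuclideanSpace ℝ (Fin n) → EuclideanSpace ℝ (Fin n))
    (hxtilde : ∀ x, xtilde x = σtilde2 • ((σy ^ 2)⁻¹ • y + (σt ^ 2)⁻¹ • x))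
    -- the noise-perturbed prior density at level `σ̃`: `p̃(z) = ∫ N(z; x₀, σ̃² I) dμ₀(x₀)`
    (ptilde : EuclideanSpace ℝ (Fin n) → ℝ)
    (hptilde : ∀ z, ptilde z = ∫ x₀, gaussDensity n σtilde2 x₀ z ∂μ₀) :
    ∃ c > 0, ∀ x, pt x = c * ptilde (xtilde x) *
      Real.exp (-‖x - y‖ ^ 2 / (2 * (σy ^ 2 + σt ^ 2))) :=
  posterior_prior_relation_denoising_general n μ₀ σt σy hσt hσy y Z hZpos μpost hpost pt hpt σtilde2
    hσtilde2 xtilde hxtilde ptilde hptilde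
end

section
/- There exists a constant c > 0 (independent of x) such that for every x ∈ ℝⁿ, p_t(x | y) = c · exp(−‖A(x − y)‖² / (2(σ_y² + σ_t²))) · p_{Σ̃}(x̃(x)). (Posterior–prior relation for the inpainting measurement model, the intermediate factorization underlying Proposition 2.) -/
/-! Multiplying the likelihood `exp(−‖A(y − x₀)‖²/(2σ_y²))` by the Gaussian kernel `N(x; x₀, σ_t²I)`
and completing the square in `x₀`, coordinate by coordinate, gives
`exp(−‖A(x − y)‖²/(2(σ_y² + σ_t²))) · N(x̃(x); x₀, Σ̃)` up to a factor independent of `x` and `x₀`.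
Integrating against `μ₀` turns the right-hand side into `p_{Σ̃}(x̃(x))` and the left-hand side into
`Z · p_t(x | y)`. -/

open MeasureTheory Real

/-- Gaussian density on ℝⁿ with mean `m` and diagonal covariance `Σ = diag(s₁,…,sₙ)`:
`N(x; m, Σ) = (2π)^{-n/2} det(Σ)^{-1/2} exp(-½⟨x−m, Σ⁻¹(x−m)⟩)`. -/
noncomputable def diagGaussDensity (n : ℕ) (s : Fin n → ℝ) (m x : EuclideanSpace ℝ (Fin n)) :
    ℝ :=
  (2 * π) ^ (-(n : ℝ) / 2) * (∏ i, s i) ^ (-(1 : ℝ) / 2) *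
    Real.exp (-(∑ i, (x i - m i) ^ 2 / s i) / 2)

theorem mask_sq_div_add_sq_div {d vy vt : ℝ} (hd : d = 0 ∨ d = 1) (hvy : 0 < vy) (hvt : 0 < vt)
    (x y z : ℝ) :
    (d * (y - z)) ^ 2 / (2 * vy) + (x - z) ^ 2 / (2 * vt) =
      (d * (x - y)) ^ 2 / (2 * (vy + vt)) +
        ((vy⁻¹ * d + vt⁻¹)⁻¹ * (vy⁻¹ * (d * y) + vt⁻¹ * x) - z) ^ 2 / (vy⁻¹ * d + vt⁻¹)⁻¹ / 2 := by
  rcases hd with rfl | rfl <;> field_simp <;> ring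

section Mask

variable {n : ℕ} {d : Fin n → ℝ} {A : EuclideanSpace ℝ (Fin n) → EuclideanSpace ℝ (Fin n)}

theorem norm_sq_eq_sum_of_apply_eq_mul (hA : ∀ v i, A v i = d i * v i)
    (v : EuclideanSpace ℝ (Fin n)) : ‖A v‖ ^ 2 = ∑ i, (d i * v i) ^ 2 := by
  simp only [EuclideanSpace.real_norm_sq_eq, hA]

theorem continuous_of_apply_eq_mul (hA : ∀ v i, A v i = d i * v i) : Continuous A := by
  have : A = fun v => WithLp.toLp 2 (fun i => d i * v i) := by
    funext v; ext i; simp [hA]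
  rw [this]
  fun_prop

variable {vy vt : ℝ} {s : Fin n → ℝ} {x y z xt : EuclideanSpace ℝ (Fin n)}

theorem prod_pos_of_eq_inv_mul_add_inv (hvy : 0 < vy) (hvt : 0 < vt)
    (hd : ∀ i, d i = 0 ∨ d i = 1) (hs : ∀ i, s i = (vy⁻¹ * d i + vt⁻¹)⁻¹) : 0 < ∏ i, s i :=
  Finset.prod_pos fun i _ => by
    have : 0 ≤ d i := (hd i).elim (fun h => h.ge) fun h => h ▸ zero_le_one
    rw [hs i]
    positivity

theorem mask_norm_sq_div_add_norm_sq_div (hvy : 0 < vy) (hvt : 0 < vt)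
    (hd : ∀ i, d i = 0 ∨ d i = 1) (hA : ∀ v i, A v i = d i * v i)
    (hs : ∀ i, s i = (vy⁻¹ * d i + vt⁻¹)⁻¹)
    (hxt : ∀ i, xt i = s i * (vy⁻¹ * (d i * y i) + vt⁻¹ * x i)) :
    ‖A (y - z)‖ ^ 2 / (2 * vy) + ‖x - z‖ ^ 2 / (2 * vt) =
      ‖A (x - y)‖ ^ 2 / (2 * (vy + vt)) + (∑ i, (xt i - z i) ^ 2 / s i) / 2 := by
  simp only [norm_sq_eq_sum_of_apply_eq_mul hA, EuclideanSpace.real_norm_sq_eq, Finset.sum_div,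
    ← Finset.sum_add_distrib, PiLp.sub_apply, hxt, hs]
  exact Finset.sum_congr rfl fun i _ => mask_sq_div_add_sq_div (hd i) hvy hvt _ _ _

theorem exp_mul_gaussDensity_eq_mul_diagGaussDensity (hvy : 0 < vy) (hvt : 0 < vt)
    (hd : ∀ i, d i = 0 ∨ d i = 1) (hA : ∀ v i, A v i = d i * v i)
    (hs : ∀ i, s i = (vy⁻¹ * d i + vt⁻¹)⁻¹)
    (hxt : ∀ i, xt i = s i * (vy⁻¹ * (d i * y i) + vt⁻¹ * x i)) :
    exp (-‖A (y - z)‖ ^ 2 / (2 * vy)) * gaussDensity n vt z x =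
      (2 * π * vt) ^ (-(n : ℝ) / 2) / ((2 * π) ^ (-(n : ℝ) / 2) * (∏ i, s i) ^ (-(1 : ℝ) / 2)) *
        exp (-‖A (x - y)‖ ^ 2 / (2 * (vy + vt))) * diagGaussDensity n s z xt := by
  have hexp := mask_norm_sq_div_add_norm_sq_div (z := z) hvy hvt hd hA hs hxt
  have hprod := prod_pos_of_eq_inv_mul_add_inv hvy hvt hd hs
  simp only [gaussDensity, diagGaussDensity]
  calc _ = (2 * π * vt) ^ (-(n : ℝ) / 2) *
        exp (-(‖A (y - z)‖ ^ 2 / (2 * vy) + ‖x - z‖ ^ 2 / (2 * vt))) := by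
          rw [neg_add, exp_add, ← neg_div, ← neg_div]; ring
    _ = _ := by
      rw [hexp, neg_add, exp_add, ← neg_div, ← neg_div]
      field_simp

theorem posterior_prior_relation_inpainting_general
    (n : ℕ)
    (μ₀ : Measure (EuclideanSpace ℝ (Fin n)))
    (σt σy : ℝ) (hσt : 0 < σt) (hσy : 0 < σy)
    (y : EuclideanSpace ℝ (Fin n))
    -- the inpainting mask `A = diag(d₁,…,dₙ)` with `dᵢ ∈ {0,1}`
    (d : Fin n → ℝ) (hd : ∀ i, d i = 0 ∨ d i = 1)
    (A : EuclideanSpace ℝ (Fin n) → EuclideanSpace ℝ (Fin n))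
    (hA : ∀ v i, A v i = d i * v i)
    -- the normalizing constant `Z = ∫ exp(−‖A(y − x₀)‖²/(2σ_y²)) dμ₀(x₀) > 0`
    (Z : ℝ) (hZpos : 0 < Z)
    -- the inpainting posterior `μ₀^y`, with density `exp(−‖A(y − x₀)‖²/(2σ_y²))/Z` w.r.t. `μ₀`
    (μpost : Measure (EuclideanSpace ℝ (Fin n)))
    (hpost : μpost = μ₀.withDensity
      (fun x₀ => ENNReal.ofReal (Real.exp (-‖A (y - x₀)‖ ^ 2 / (2 * σy ^ 2)) / Z)))
    -- the noise-perturbed posterior density `p_t(x | y) = ∫ N(x; x₀, σ_t² I) dμ₀^y(x₀)`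
    (pt : EuclideanSpace ℝ (Fin n) → ℝ)
    (hpt : ∀ x, pt x = ∫ x₀, gaussDensity n (σt ^ 2) x₀ x ∂μpost)
    -- the diagonal entries of `Σ̃ = (σ_y⁻²A + σ_t⁻²I)⁻¹`
    (s : Fin n → ℝ) (hs : ∀ i, s i = ((σy ^ 2)⁻¹ * d i + (σt ^ 2)⁻¹)⁻¹)
    -- `x̃(x) = Σ̃ (σ_y⁻² A y + σ_t⁻² x)`
    (xtilde : EuclideanSpace ℝ (Fin n) → EuclideanSpace ℝ (Fin n))
    (hxtilde : ∀ x i, xtilde x i = s i * ((σy ^ 2)⁻¹ * (d i * y i) + (σt ^ 2)⁻¹ * x i))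
    -- the non-isotropic noise-perturbed prior density `p_{Σ̃}(z) = ∫ N(z; x₀, Σ̃) dμ₀(x₀)`
    (pSig : EuclideanSpace ℝ (Fin n) → ℝ)
    (hpSig : ∀ z, pSig z = ∫ x₀, diagGaussDensity n s x₀ z ∂μ₀) :
    ∃ c > 0, ∀ x, pt x =
      c * Real.exp (-‖A (x - y)‖ ^ 2 / (2 * (σy ^ 2 + σt ^ 2))) * pSig (xtilde x) := by
  have hvy : 0 < σy ^ 2 := by positivity
  have hvt : 0 < σt ^ 2 := by positivity
  have hprod := prod_pos_of_eq_inv_mul_add_inv hvy hvt hd hs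
  have hA_cont := continuous_of_apply_eq_mul hA
  refine ⟨(2 * π * σt ^ 2) ^ (-(n : ℝ) / 2) /
      ((2 * π) ^ (-(n : ℝ) / 2) * (∏ i, s i) ^ (-(1 : ℝ) / 2)) / Z, by positivity, fun x => ?_⟩
  rw [hpt, hpost, integral_withDensity_ofReal (by fun_prop) (ae_of_all _ fun _ => by positivity),
    hpSig, ← integral_const_mul]
  congr 1 with x₀
  rw [smul_eq_mul, div_mul_eq_mul_div,
    exp_mul_gaussDensity_eq_mul_diagGaussDensity hvy hvt hd hA hs (hxtilde x)]
  ring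

/-- Posterior–prior relation for the inpainting measurement model (the intermediate
factorization underlying Proposition 2): there is a constant `c > 0`, independent of `x`,
with `p_t(x | y) = c · exp(−‖A(x − y)‖²/(2(σ_y² + σ_t²))) · p_{Σ̃}(x̃(x))`. -/
theorem posterior_prior_relation_inpainting
    (n : ℕ) (hn : 1 ≤ n)
    (μ₀ : Measure (EuclideanSpace ℝ (Fin n))) [IsProbabilityMeasure μ₀]
    (σt σy : ℝ) (hσt : 0 < σt) (hσy : 0 < σy)
    (y : EuclideanSpace ℝ (Fin n))
    -- the inpainting mask `A = diag(d₁,…,dₙ)` with `dᵢ ∈ {0,1}`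
    (d : Fin n → ℝ) (hd : ∀ i, d i = 0 ∨ d i = 1)
    (A : EuclideanSpace ℝ (Fin n) → EuclideanSpace ℝ (Fin n))
    (hA : ∀ v i, A v i = d i * v i)
    -- the normalizing constant `Z = ∫ exp(−‖A(y − x₀)‖²/(2σ_y²)) dμ₀(x₀) > 0`
    (Z : ℝ) (hZ : Z = ∫ x₀, Real.exp (-‖A (y - x₀)‖ ^ 2 / (2 * σy ^ 2)) ∂μ₀) (hZpos : 0 < Z)
    -- the inpainting posterior `μ₀^y`, with density `exp(−‖A(y − x₀)‖²/(2σ_y²))/Z` w.r.t. `μ₀`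
    (μpost : Measure (EuclideanSpace ℝ (Fin n)))
    (hpost : μpost = μ₀.withDensity
      (fun x₀ => ENNReal.ofReal (Real.exp (-‖A (y - x₀)‖ ^ 2 / (2 * σy ^ 2)) / Z)))
    -- the noise-perturbed posterior density `p_t(x | y) = ∫ N(x; x₀, σ_t² I) dμ₀^y(x₀)`
    (pt : EuclideanSpace ℝ (Fin n) → ℝ)
    (hpt : ∀ x, pt x = ∫ x₀, gaussDensity n (σt ^ 2) x₀ x ∂μpost)
    -- the diagonal entries of `Σ̃ = (σ_y⁻²A + σ_t⁻²I)⁻¹`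
    (s : Fin n → ℝ) (hs : ∀ i, s i = ((σy ^ 2)⁻¹ * d i + (σt ^ 2)⁻¹)⁻¹)
    -- `x̃(x) = Σ̃ (σ_y⁻² A y + σ_t⁻² x)`
    (xtilde : EuclideanSpace ℝ (Fin n) → EuclideanSpace ℝ (Fin n))
    (hxtilde : ∀ x i, xtilde x i = s i * ((σy ^ 2)⁻¹ * (d i * y i) + (σt ^ 2)⁻¹ * x i))
    -- the non-isotropic noise-perturbed prior density `p_{Σ̃}(z) = ∫ N(z; x₀, Σ̃) dμ₀(x₀)`
    (pSig : EuclideanSpace ℝ (Fin n) → ℝ)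
    (hpSig : ∀ z, pSig z = ∫ x₀, diagGaussDensity n s x₀ z ∂μ₀) :
    ∃ c > 0, ∀ x, pt x =
      c * Real.exp (-‖A (x - y)‖ ^ 2 / (2 * (σy ^ 2 + σt ^ 2))) * pSig (xtilde x) :=
  posterior_prior_relation_inpainting_general n μ₀ σt σy hσt hσy y d hd A hA Z hZpos μpost hpost pt
    hpt s hs xtilde hxtilde pSig hpSig
end Mask
end

section
/- Let A = diag(d₁,…,dₙ) with each dᵢ ∈ {0,1}, let y ∈ ℝⁿ, and let ν be a Borel probability measure on ℝⁿ such that ν({x₀ : Ax₀ = Ay}) = 1 (a noiseless-inpainting posterior, supported on data agreeing with y on the unmasked pixels). Define q_t(x) = ∫ N(x; x₀, σ_t²I) dν(x₀) for σ_t > 0. Then q_t is everywhere positive and differentiable, and for every x ∈ ℝⁿ, the unmasked components of its score are exactly A · ∇_x log q_t(x) = −σ_t^{−2} A(x − y). (The exact unmasked-pixel condition for noiseless inpainting stated in Section 4.2.) -/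
open MeasureTheory Real

/-!
Differentiating under the integral sign, which is legitimate because the gradient
`(N(x; x₀, σ²I)/σ²)(x₀ - x)` of the Gaussian is bounded uniformly in `x₀` and `x`, gives
`∇ log q(x) = σ⁻² (𝔼[x₀ ∣ x] - x)`, where the posterior mean is taken against
`N(x; x₀, σ²I) dν(x₀) / q(x)`. Almost every `x₀` agrees with `y` on the unmasked coordinates,
so there the posterior mean is `y` itself.
-/

lemma mul_exp_neg_sq_div_le {v : ℝ} (hv : 0 < v) (r : ℝ) :
    r * exp (-r ^ 2 / (2 * v)) ≤ √(2 * v) := by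
  set s := √(2 * v)
  have hs : 0 < s := by positivity
  have hs2 : s ^ 2 = 2 * v := Real.sq_sqrt (by positivity)
  rw [← hs2, neg_div, exp_neg, ← div_eq_mul_inv, div_le_iff₀ (exp_pos _)]
  calc r ≤ s * (1 + r ^ 2 / s ^ 2) := by
        have : r - s ≤ r ^ 2 / s := by rw [le_div_iff₀ hs]; nlinarith [sq_nonneg (r - s)]
        rw [mul_add, mul_one, pow_two s, ← div_div, mul_div_cancel₀ _ hs.ne']
        linarith
    _ ≤ s * exp (r ^ 2 / s ^ 2) := by gcongr; linarith [add_one_le_exp (r ^ 2 / s ^ 2)]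

section

variable {n : ℕ} {v : ℝ}

lemma gaussDensity_pos (hv : 0 < v) (m x : EuclideanSpace ℝ (Fin n)) :
    0 < gaussDensity n v m x := by
  unfold gaussDensity
  have := pi_pos
  positivity

lemma gaussDensity_le (hv : 0 < v) (m x : EuclideanSpace ℝ (Fin n)) :
    gaussDensity n v m x ≤ (2 * π * v) ^ (-(n : ℝ) / 2) := by
  have := pi_pos
  refine mul_le_of_le_one_right (by positivity) (exp_le_one_iff.2 ?_)
  exact div_nonpos_of_nonpos_of_nonneg (by simp) (by positivity)

lemma gaussDensity_mul_norm_sub_le (hv : 0 < v) (m x : EuclideanSpace ℝ (Fin n)) :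
    gaussDensity n v m x * ‖m - x‖ ≤ (2 * π * v) ^ (-(n : ℝ) / 2) * √(2 * v) := by
  have := pi_pos
  rw [gaussDensity, mul_assoc, norm_sub_rev, mul_comm (exp _)]
  gcongr
  exact mul_exp_neg_sq_div_le hv _

@[fun_prop]
lemma continuous_gaussDensity_mean (x : EuclideanSpace ℝ (Fin n)) :
    Continuous fun m => gaussDensity n v m x := by
  unfold gaussDensity
  fun_prop

lemma hasGradientAt_gaussDensity (m x : EuclideanSpace ℝ (Fin n)) :
    HasGradientAt (gaussDensity n v m) ((gaussDensity n v m x / v) • (m - x)) x := by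
  have hsq : HasFDerivAt (fun z : EuclideanSpace ℝ (Fin n) => ‖z - m‖ ^ 2)
      (2 • innerSL ℝ (x - m)) x := by
    simpa using ((hasFDerivAt_id x).sub_const m).norm_sq
  have h := ((hsq.const_mul (-(2 * v)⁻¹)).exp).const_mul ((2 * π * v) ^ (-(n : ℝ) / 2))
  have hfun : gaussDensity n v m =
      fun z => (2 * π * v) ^ (-(n : ℝ) / 2) * exp (-(2 * v)⁻¹ * ‖z - m‖ ^ 2) := by
    funext z
    simp only [gaussDensity]
    ring_nf
  rw [hasGradientAt_iff_hasFDerivAt, hfun]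
  refine h.congr_fderiv ?_
  ext z
  simp only [map_sub, map_smul, smul_apply, sub_apply, coe_innerSL_apply, nsmul_eq_mul,
    Nat.cast_ofNat, smul_eq_mul, InnerProductSpace.toDual_apply_apply]
  ring

noncomputable def gaussMixture (n : ℕ) (v : ℝ) (ν : Measure (EuclideanSpace ℝ (Fin n)))
    (x : EuclideanSpace ℝ (Fin n)) : ℝ :=
  ∫ a, gaussDensity n v a x ∂ν

section gaussMixture

variable (ν : Measure (EuclideanSpace ℝ (Fin n))) [IsFiniteMeasure ν]

lemma integrable_gaussDensity (hv : 0 < v) (x : EuclideanSpace ℝ (Fin n)) :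
    Integrable (fun a => gaussDensity n v a x) ν := by
  refine (integrable_const ((2 * π * v) ^ (-(n : ℝ) / 2))).mono'
    (by fun_prop : Continuous _).aestronglyMeasurable (.of_forall fun a => ?_)
  rw [norm_of_nonneg (gaussDensity_pos hv a x).le]
  exact gaussDensity_le hv a x

lemma norm_gaussDensity_div_smul_sub_le (hv : 0 < v) (a x : EuclideanSpace ℝ (Fin n)) :
    ‖(gaussDensity n v a x / v) • (a - x)‖ ≤ (2 * π * v) ^ (-(n : ℝ) / 2) * √(2 * v) / v := by
  rw [norm_smul, norm_div, norm_of_nonneg (gaussDensity_pos hv a x).le, norm_of_nonneg hv.le,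
    div_mul_eq_mul_div]
  exact div_le_div_of_nonneg_right (gaussDensity_mul_norm_sub_le hv a x) hv.le

lemma integrable_gaussDensity_div_smul_sub (hv : 0 < v) (x : EuclideanSpace ℝ (Fin n)) :
    Integrable (fun a => (gaussDensity n v a x / v) • (a - x)) ν :=
  (integrable_const _).mono' (by fun_prop : Continuous _).aestronglyMeasurable
    (.of_forall fun a => norm_gaussDensity_div_smul_sub_le hv a x)

lemma gaussMixture_pos [NeZero ν] (hv : 0 < v) (x : EuclideanSpace ℝ (Fin n)) :
    0 < gaussMixture n v ν x := by
  rw [gaussMixture, integral_pos_iff_support_of_nonneg (fun a => (gaussDensity_pos hv a x).le)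
    (integrable_gaussDensity ν hv x)]
  simp [Function.support, (gaussDensity_pos hv _ x).ne', NeZero.ne ν]

lemma hasGradientAt_gaussMixture (hv : 0 < v) (x : EuclideanSpace ℝ (Fin n)) :
    HasGradientAt (gaussMixture n v ν) (∫ a, (gaussDensity n v a x / v) • (a - x) ∂ν) x := by
  have h := hasFDerivAt_integral_of_dominated_of_fderiv_le (μ := ν) (s := Set.univ)
    (F' := fun x' a => innerSL ℝ ((gaussDensity n v a x' / v) • (a - x')))
    (bound := fun _ => (2 * π * v) ^ (-(n : ℝ) / 2) * √(2 * v) / v)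
    Filter.univ_mem (.of_forall fun x' => (by fun_prop : Continuous _).aestronglyMeasurable)
    (integrable_gaussDensity ν hv x) (by fun_prop : Continuous _).aestronglyMeasurable
    (.of_forall fun a x' _ => (innerSL_apply_norm ℝ _).trans_le
      (norm_gaussDensity_div_smul_sub_le hv a x'))
    (integrable_const _)
    (.of_forall fun a x' _ => (hasGradientAt_gaussDensity a x').hasFDerivAt)
  rwa [(innerSL ℝ).integral_comp_comm (integrable_gaussDensity_div_smul_sub ν hv x)] at h

lemma hasGradientAt_log_gaussMixture [NeZero ν] (hv : 0 < v) (x : EuclideanSpace ℝ (Fin n)) :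
    HasGradientAt (fun z => log (gaussMixture n v ν z))
      ((gaussMixture n v ν x)⁻¹ • ∫ a, (gaussDensity n v a x / v) • (a - x) ∂ν) x := by
  have h := (hasGradientAt_gaussMixture ν hv x).hasFDerivAt.log (gaussMixture_pos ν hv x).ne'
  rw [hasGradientAt_iff_hasFDerivAt, map_smulₛₗ]
  exact h

lemma mul_gradient_log_gaussMixture_apply [NeZero ν] (hv : 0 < v) {i : Fin n} {c b : ℝ}
    (h : ∀ᵐ a ∂ν, c * a i = c * b) (x : EuclideanSpace ℝ (Fin n)) :
    c * gradient (fun z => log (gaussMixture n v ν z)) x i = -(v⁻¹ * (c * (x i - b))) := by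
  have hproj : (∫ a, (gaussDensity n v a x / v) • (a - x) ∂ν) i
      = ∫ a, ((gaussDensity n v a x / v) • (a - x)) i ∂ν :=
    ((EuclideanSpace.proj i).integral_comp_comm (integrable_gaussDensity_div_smul_sub ν hv x)).symm
  have hcoord : ∀ᵐ a ∂ν, c * ((gaussDensity n v a x / v) • (a - x)) i
      = gaussDensity n v a x * (c * (b - x i) / v) := h.mono fun a ha => by
    simp only [PiLp.smul_apply, PiLp.sub_apply, smul_eq_mul]
    linear_combination (gaussDensity n v a x / v) * ha
  rw [(hasGradientAt_log_gaussMixture ν hv x).gradient, PiLp.smul_apply, smul_eq_mul, hproj,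
    mul_left_comm, ← integral_const_mul, integral_congr_ae hcoord, integral_mul_const,
    ← gaussMixture]
  have := (gaussMixture_pos ν hv x).ne'
  field_simp
  ring

end gaussMixture

end

theorem noiseless_inpainting_unmasked_score_general
    (n : ℕ)
    -- the inpainting mask `A = diag(d₁,…,dₙ)` with `dᵢ ∈ {0,1}`
    (d : Fin n → ℝ)
    (A : EuclideanSpace ℝ (Fin n) → EuclideanSpace ℝ (Fin n))
    (hA : ∀ v i, A v i = d i * v i)
    (y : EuclideanSpace ℝ (Fin n))
    -- a noiseless-inpainting posterior: `ν({x₀ : Ax₀ = Ay}) = 1`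
    (ν : Measure (EuclideanSpace ℝ (Fin n))) [IsProbabilityMeasure ν]
    (hν : ν {x₀ | A x₀ = A y} = 1)
    (σt : ℝ) (hσt : 0 < σt)
    -- `q_t(x) = ∫ N(x; x₀, σ_t²I) dν(x₀)`
    (qt : EuclideanSpace ℝ (Fin n) → ℝ)
    (hqt : ∀ x, qt x = ∫ x₀, gaussDensity n (σt ^ 2) x₀ x ∂ν) :
    (∀ x, 0 < qt x) ∧ (∀ x, DifferentiableAt ℝ qt x) ∧
      ∀ x, A (gradient (fun z => Real.log (qt z)) x) = -((σt ^ 2)⁻¹ • A (x - y)) := by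
  have hv : 0 < σt ^ 2 := by positivity
  obtain rfl : qt = gaussMixture n (σt ^ 2) ν := funext hqt
  refine ⟨gaussMixture_pos ν hv, fun x => (hasGradientAt_gaussMixture ν hv x).differentiableAt,
    fun x => ?_⟩
  ext i
  -- `{x₀ | A x₀ = A y}` is not known to be measurable, so pass to a closed superset.
  have hunmasked : ∀ᵐ a ∂ν, d i * a i = d i * y i := by
    have hsub : {x₀ | A x₀ = A y} ⊆ {a | d i * a i = d i * y i} := fun a ha => by
      simpa only [Set.mem_ofPred_eq, hA] using congrArg (· i) ha
    refine (mem_ae_iff_prob_eq_one (isClosed_eq (by fun_prop) continuous_const).measurableSet).2 ?_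
    exact le_antisymm prob_le_one (hν ▸ measure_mono hsub)
  simpa only [hA, PiLp.neg_apply, PiLp.smul_apply, PiLp.sub_apply, smul_eq_mul]
    using mul_gradient_log_gaussMixture_apply ν hv hunmasked x

/-- Section 4.2: the exact unmasked-pixel condition for noiseless inpainting.  If `ν` is a
probability measure supported on `{x₀ : Ax₀ = Ay}` and `q_t(x) = ∫ N(x; x₀, σ_t²I) dν(x₀)`,
then `q_t` is everywhere positive and differentiable, and the unmasked components of its
score are exactly `A ∇ log q_t(x) = −σ_t⁻² A(x − y)`. -/
theorem noiseless_inpainting_unmasked_score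
    (n : ℕ) (hn : 1 ≤ n)
    -- the inpainting mask `A = diag(d₁,…,dₙ)` with `dᵢ ∈ {0,1}`
    (d : Fin n → ℝ) (hd : ∀ i, d i = 0 ∨ d i = 1)
    (A : EuclideanSpace ℝ (Fin n) → EuclideanSpace ℝ (Fin n))
    (hA : ∀ v i, A v i = d i * v i)
    (y : EuclideanSpace ℝ (Fin n))
    -- a noiseless-inpainting posterior: `ν({x₀ : Ax₀ = Ay}) = 1`
    (ν : Measure (EuclideanSpace ℝ (Fin n))) [IsProbabilityMeasure ν]
    (hν : ν {x₀ | A x₀ = A y} = 1)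
    (σt : ℝ) (hσt : 0 < σt)
    -- `q_t(x) = ∫ N(x; x₀, σ_t²I) dν(x₀)`
    (qt : EuclideanSpace ℝ (Fin n) → ℝ)
    (hqt : ∀ x, qt x = ∫ x₀, gaussDensity n (σt ^ 2) x₀ x ∂ν) :
    (∀ x, 0 < qt x) ∧ (∀ x, DifferentiableAt ℝ qt x) ∧
      ∀ x, A (gradient (fun z => Real.log (qt z)) x) = -((σt ^ 2)⁻¹ • A (x - y)) :=
  noiseless_inpainting_unmasked_score_general n d A hA y ν hν σt hσt qt hqt
end
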